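/- Let F : D₁ → D₂ be a triangle functor between triangulated categories, and let (U₁, …, U_n) and (V₁, …, V_n) be n-gons of recollements in D₁ and D₂ respectively, such that F(U_k) ⊆ V_k for all k. If n is odd and F restricted to U_t is a triangle equivalence for some t, then F is a triangle equivalence. If n is even and F restricted to both U_t and U_{t+1} are triangle equivalences for some t, then F is a triangle equivalence. -/

import Mathlib

/-!
A stable t-structure `(U, V)` puts every object `X` in a triangle `A ⟶ X ⟶ B ⟶ A⟦1⟧` with
`A ∈ U`, `B ∈ V`, and the Hom sequences of these triangles drive the argument. If `F` is fully
faithful on `U₀`, it is bijective on `Hom(A, Y)` for every `A ∈ U₀` (replace `Y` by its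
`U₀`-part). So full faithfulness on two consecutive pieces `U₀`, `U₁` gives it on all of `C` by
the five lemma, and essential surjectivity onto `V₀`, `V₁` gives it onto `D`, because the
essential image of a full triangle functor is closed under extensions.
An equivalence on `U₀` also propagates to `U₂`. For `X, Y ∈ U₂`, `Hom(X, Y) = Hom(A, Y)` where
`A` is the `U₀`-part of `X`; and an object of `V₂` is the `(V₁, V₂)`-truncation of some `F A`
with `A ∈ U₀`, hence isomorphic to `F` of the `(U₁, U₂)`-truncation of `A`. Around an odd
`n`-gon, steps of two reach `t + 1` from `t`.
-/

open CategoryTheory Limits Pretriangulated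

universe v₁ v₂ u₁ u₂

namespace PaperIKM

variable (C : Type u₁) [Category.{v₁} C] [HasZeroObject C] [HasShift C ℤ] [Preadditive C]
  [∀ n : ℤ, (shiftFunctor C n).Additive] [Pretriangulated C]

/-- A stable t-structure in a pretriangulated category. -/
structure IsStableTStructure (U V : Set C) : Prop where
  shift_memU : ∀ (n : ℤ) (X : C), X ∈ U → (shiftFunctor C n).obj X ∈ U
  shift_memV : ∀ (n : ℤ) (X : C), X ∈ V → (shiftFunctor C n).obj X ∈ V
  hom_zero : ∀ ⦃X Y : C⦄, X ∈ U → Y ∈ V → ∀ f : X ⟶ Y, f = 0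
  exists_triangle : ∀ X : C, ∃ (A B : C) (_ : A ∈ U) (_ : B ∈ V)
    (f : A ⟶ X) (g : X ⟶ B) (h : B ⟶ A⟦(1 : ℤ)⟧),
      Triangle.mk f g h ∈ distTriang C

variable {C}
variable {D : Type u₂} [Category.{v₂} D] [HasZeroObject D] [HasShift D ℤ] [Preadditive D]
  [∀ n : ℤ, (shiftFunctor D n).Additive] [Pretriangulated D]

/-- `F` restricts to a triangle equivalence between the full subcategories determined by
`U` and `V` : fully faithful on `U` and essentially surjective from `U` onto `V`. -/
def RestrictsToEquivalence (F : C ⥤ D) (U : Set C) (V : Set D) : Prop :=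
  (∀ (X Y : C), X ∈ U → Y ∈ U → Function.Bijective (fun f : X ⟶ Y => F.map f)) ∧
  (∀ Z ∈ V, ∃ X ∈ U, Nonempty (F.obj X ≅ Z))

lemma bijective_mor₁_comp {T : Triangle C} (hT : T ∈ distTriang C) {Y : C}
    (h₃ : ∀ f : T.obj₃ ⟶ Y, f = 0) (h₃' : ∀ f : T.obj₃⟦(-1 : ℤ)⟧ ⟶ Y, f = 0) :
    Function.Bijective (fun g : T.obj₂ ⟶ Y => T.mor₁ ≫ g) := by
  refine ⟨fun f g hfg => ?_, fun f => ?_⟩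
  · obtain ⟨h, hh⟩ := Triangle.yoneda_exact₂ T hT (f - g)
      (by simpa only [Preadditive.comp_sub, sub_eq_zero] using hfg)
    rwa [h₃ h, comp_zero, sub_eq_zero] at hh
  · obtain ⟨g, hg⟩ := Triangle.yoneda_exact₂ _ (inv_rot_of_distTriang T hT) f (h₃' _)
    exact ⟨g, hg.symm⟩

lemma bijective_comp_mor₁ {T : Triangle C} (hT : T ∈ distTriang C) {X : C}
    (h₃ : ∀ f : X ⟶ T.obj₃, f = 0) (h₃' : ∀ f : X ⟶ T.obj₃⟦(-1 : ℤ)⟧, f = 0) :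
    Function.Bijective (fun g : X ⟶ T.obj₁ => g ≫ T.mor₁) := by
  refine ⟨fun f g hfg => ?_, fun f => ?_⟩
  · have hfg' : (f - g) ≫ T.mor₁ = 0 := by rw [Preadditive.sub_comp, sub_eq_zero]; exact hfg
    obtain ⟨h, hh⟩ := Triangle.coyoneda_exact₂ _ (inv_rot_of_distTriang T hT) _ hfg'
    obtain rfl : h = 0 := h₃' h
    exact sub_eq_zero.mp (hh.trans zero_comp)
  · obtain ⟨g, hg⟩ := Triangle.coyoneda_exact₂ T hT f (h₃ _)
    exact ⟨g, hg.symm⟩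

lemma nonempty_iso_of_bijective_comp {E : Type*} [Category E] {V : Set E} {P Z Z' : E}
    (p : P ⟶ Z) (p' : P ⟶ Z') (hZ : Z ∈ V) (hZ' : Z' ∈ V)
    (hp : ∀ W ∈ V, Function.Bijective (fun g : Z ⟶ W => p ≫ g))
    (hp' : ∀ W ∈ V, Function.Bijective (fun g : Z' ⟶ W => p' ≫ g)) :
    Nonempty (Z ≅ Z') := by
  obtain ⟨u, hu : p ≫ u = p'⟩ := (hp Z' hZ').2 p'
  obtain ⟨v, hv : p' ≫ v = p⟩ := (hp' Z hZ).2 p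
  refine ⟨⟨u, v, (hp Z hZ).1 ?_, (hp' Z' hZ').1 ?_⟩⟩
  · simp only [reassoc_of% hu, hv, Category.comp_id]
  · simp only [reassoc_of% hv, hu, Category.comp_id]

section Functor

variable (F : C ⥤ D) [F.CommShift ℤ] [F.IsTriangulated]

lemma exists_eq_map_mor₃_comp {T : Triangle C} (hT : T ∈ distTriang C) {Y : D}
    (g : F.obj T.obj₃ ⟶ Y) (hg : F.map T.mor₂ ≫ g = 0) :
    ∃ h : F.obj (T.obj₁⟦(1 : ℤ)⟧) ⟶ Y, g = F.map T.mor₃ ≫ h := by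
  obtain ⟨h, hh⟩ := Triangle.yoneda_exact₃ _ (F.map_distinguished T hT) g hg
  exact ⟨(F.commShiftIso (1 : ℤ)).hom.app T.obj₁ ≫ h, hh.trans (Category.assoc _ _ _)⟩

lemma map_injective_obj₂_of_distTriang {T : Triangle C} (hT : T ∈ distTriang C) {Y : C}
    (h₁ : Function.Injective (fun f : T.obj₁ ⟶ Y => F.map f))
    (h₃ : Function.Injective (fun f : T.obj₃ ⟶ Y => F.map f))
    (h₁' : Function.Surjective (fun f : T.obj₁⟦(1 : ℤ)⟧ ⟶ Y => F.map f)) :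
    Function.Injective (fun f : T.obj₂ ⟶ Y => F.map f) := by
  refine (injective_iff_map_eq_zero F.mapAddHom).2 fun f (hf : F.map f = 0) => ?_
  obtain ⟨g, rfl⟩ := Triangle.yoneda_exact₂ T hT f (h₁ (by simp [hf]))
  obtain ⟨h, hh⟩ := exists_eq_map_mor₃_comp F hT (F.map g) ((F.map_comp _ _).symm.trans hf)
  obtain ⟨k, rfl⟩ := h₁' h
  obtain rfl : g = T.mor₃ ≫ k := h₃ (hh.trans (F.map_comp _ _).symm)
  rw [← Category.assoc, comp_distTriang_mor_zero₂₃ _ hT, zero_comp]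

lemma map_surjective_obj₃_of_distTriang {T : Triangle C} (hT : T ∈ distTriang C) {Y : C}
    (h₁ : Function.Injective (fun f : T.obj₁ ⟶ Y => F.map f))
    (h₂ : Function.Surjective (fun f : T.obj₂ ⟶ Y => F.map f))
    (h₁' : Function.Surjective (fun f : T.obj₁⟦(1 : ℤ)⟧ ⟶ Y => F.map f)) :
    Function.Surjective (fun f : T.obj₃ ⟶ Y => F.map f) := by
  intro φ
  obtain ⟨α, hα : F.map α = F.map T.mor₂ ≫ φ⟩ := h₂ (F.map T.mor₂ ≫ φ)
  have hα₀ : T.mor₁ ≫ α = 0 :=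
    h₁ (by simp [hα, ← F.map_comp_assoc, comp_distTriang_mor_zero₁₂ _ hT])
  obtain ⟨f, rfl⟩ := Triangle.yoneda_exact₂ T hT α hα₀
  obtain ⟨ψ, hψ⟩ := exists_eq_map_mor₃_comp F hT (φ - F.map f)
    (by simpa [sub_eq_zero] using hα.symm)
  obtain ⟨g, rfl⟩ := h₁' ψ
  refine ⟨f + T.mor₃ ≫ g, ?_⟩
  simp only [F.map_add, F.map_comp, ← hψ, add_sub_cancel]

lemma map_bijective_of_mem_left {U₀ U₁ : Set C} {V₀ V₁ : Set D}
    (hU : IsStableTStructure C U₀ U₁) (hV : IsStableTStructure D V₀ V₁)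
    (hF₀ : ∀ X ∈ U₀, F.obj X ∈ V₀) (hF₁ : ∀ X ∈ U₁, F.obj X ∈ V₁)
    (h : ∀ X Y : C, X ∈ U₀ → Y ∈ U₀ → Function.Bijective (fun f : X ⟶ Y => F.map f))
    {A : C} (hA : A ∈ U₀) (Y : C) :
    Function.Bijective (fun f : A ⟶ Y => F.map f) := by
  obtain ⟨A', B', hA', hB', a, b, c, hT⟩ := hU.exists_triangle Y
  have hC : Function.Bijective (fun g : A ⟶ A' => g ≫ a) :=
    bijective_comp_mor₁ hT (hU.hom_zero hA hB') (hU.hom_zero hA (hU.shift_memV (-1) _ hB'))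
  have hD : Function.Bijective (fun g : F.obj A ⟶ F.obj A' => g ≫ F.map a) :=
    bijective_comp_mor₁ (F.map_distinguished _ hT) (hV.hom_zero (hF₀ _ hA) (hF₁ _ hB'))
      (hV.hom_zero (hF₀ _ hA) (hV.shift_memV (-1) _ (hF₁ _ hB')))
  have hsq : (fun f : A ⟶ Y => F.map f) ∘ (fun g => g ≫ a) =
      (fun g => g ≫ F.map a) ∘ (fun g : A ⟶ A' => F.map g) :=
    funext fun g => F.map_comp g a
  exact (Function.Bijective.of_comp_iff _ hC).1 (hsq ▸ hD.comp (h A A' hA hA'))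

lemma map_bijective_of_consecutive {U₀ U₁ U₂ : Set C} {V₀ V₁ V₂ : Set D}
    (hU₀₁ : IsStableTStructure C U₀ U₁) (hU₁₂ : IsStableTStructure C U₁ U₂)
    (hV₀₁ : IsStableTStructure D V₀ V₁) (hV₁₂ : IsStableTStructure D V₁ V₂)
    (hF₀ : ∀ X ∈ U₀, F.obj X ∈ V₀) (hF₁ : ∀ X ∈ U₁, F.obj X ∈ V₁)
    (hF₂ : ∀ X ∈ U₂, F.obj X ∈ V₂)
    (h₀ : ∀ X Y : C, X ∈ U₀ → Y ∈ U₀ → Function.Bijective (fun f : X ⟶ Y => F.map f))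
    (h₁ : ∀ X Y : C, X ∈ U₁ → Y ∈ U₁ → Function.Bijective (fun f : X ⟶ Y => F.map f))
    (X Y : C) : Function.Bijective (fun f : X ⟶ Y => F.map f) := by
  have of_mem₀ {A : C} (hA : A ∈ U₀) := map_bijective_of_mem_left F hU₀₁ hV₀₁ hF₀ hF₁ h₀ hA Y
  have of_mem₁ {B : C} (hB : B ∈ U₁) := map_bijective_of_mem_left F hU₁₂ hV₁₂ hF₁ hF₂ h₁ hB Y
  obtain ⟨A, B, hA, hB, a, b, c, hT⟩ := hU₀₁.exists_triangle X
  have hB' := hU₀₁.shift_memV (-1) _ hB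
  refine ⟨map_injective_obj₂_of_distTriang F hT (of_mem₀ hA).1 (of_mem₁ hB).1
    (of_mem₀ (hU₀₁.shift_memU 1 _ hA)).2, ?_⟩
  -- surjectivity is read off the rotated triangle `B⟦-1⟧ ⟶ A ⟶ X ⟶ B⟦-1⟧⟦1⟧`
  exact map_surjective_obj₃_of_distTriang F (inv_rot_of_distTriang _ hT) (of_mem₁ hB').1
    (of_mem₀ hA).2 (of_mem₁ (hU₀₁.shift_memV 1 _ hB')).2

lemma restrictsToEquivalence_of_consecutive {U₀ U₁ U₂ : Set C} {V₀ V₁ V₂ : Set D}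
    (hU₀₁ : IsStableTStructure C U₀ U₁) (hU₁₂ : IsStableTStructure C U₁ U₂)
    (hV₀₁ : IsStableTStructure D V₀ V₁) (hV₁₂ : IsStableTStructure D V₁ V₂)
    (hF₀ : ∀ X ∈ U₀, F.obj X ∈ V₀) (hF₁ : ∀ X ∈ U₁, F.obj X ∈ V₁)
    (hF₂ : ∀ X ∈ U₂, F.obj X ∈ V₂) (h₀ : RestrictsToEquivalence F U₀ V₀) :
    RestrictsToEquivalence F U₂ V₂ := by
  refine ⟨fun X Y hX hY => ?_, fun Z hZ => ?_⟩
  · obtain ⟨A, B, hA, hB, a, b, c, hT⟩ := hU₀₁.exists_triangle X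
    have hC : Function.Bijective (fun g : X ⟶ Y => a ≫ g) :=
      bijective_mor₁_comp hT (hU₁₂.hom_zero hB hY)
        (hU₁₂.hom_zero (hU₁₂.shift_memU (-1) _ hB) hY)
    have hD : Function.Bijective (fun g : F.obj X ⟶ F.obj Y => F.map a ≫ g) :=
      bijective_mor₁_comp (F.map_distinguished _ hT) (hV₁₂.hom_zero (hF₁ _ hB) (hF₂ _ hY))
        (hV₁₂.hom_zero (hV₁₂.shift_memU (-1) _ (hF₁ _ hB)) (hF₂ _ hY))
    have hsq : (fun g => F.map a ≫ g) ∘ (fun f : X ⟶ Y => F.map f) =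
        (fun f : A ⟶ Y => F.map f) ∘ (fun g => a ≫ g) :=
      funext fun g => (F.map_comp a g).symm
    exact (Function.Bijective.of_comp_iff' hD _).1
      (hsq ▸ (map_bijective_of_mem_left F hU₀₁ hV₀₁ hF₀ hF₁ h₀.1 hA Y).comp hC)
  · obtain ⟨P, Q, hP, hQ, p, q, r, hS⟩ := hV₀₁.exists_triangle Z
    obtain ⟨A, hA, ⟨e⟩⟩ := h₀.2 P hP
    obtain ⟨E, X, hE, hX, f₁, f₂, f₃, hT⟩ := hU₁₂.exists_triangle A
    refine ⟨X, hX, nonempty_iso_of_bijective_comp (V := V₂) (F.map f₂) (e.hom ≫ p)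
      (hF₂ _ hX) hZ (fun W hW => ?_) (fun W hW => ?_)⟩
    · have hE' := hV₁₂.shift_memU 1 _ (hF₁ _ hE)
      exact bijective_mor₁_comp (rot_of_distTriang _ (F.map_distinguished _ hT))
        (hV₁₂.hom_zero hE' hW) (hV₁₂.hom_zero (hV₁₂.shift_memU (-1) _ hE') hW)
    · have hp : Function.Bijective (fun g : Z ⟶ W => p ≫ g) :=
        bijective_mor₁_comp hS (hV₁₂.hom_zero hQ hW)
          (hV₁₂.hom_zero (hV₁₂.shift_memU (-1) _ hQ) hW)
      have hcomp : (fun g : Z ⟶ W => (e.hom ≫ p) ≫ g) =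
          e.symm.homFromEquiv ∘ (fun g => p ≫ g) :=
        funext fun g => Category.assoc _ _ _
      exact hcomp ▸ e.symm.homFromEquiv.bijective.comp hp

lemma isEquivalence_of_consecutive {U₀ U₁ U₂ : Set C} {V₀ V₁ V₂ : Set D}
    (hU₀₁ : IsStableTStructure C U₀ U₁) (hU₁₂ : IsStableTStructure C U₁ U₂)
    (hV₀₁ : IsStableTStructure D V₀ V₁) (hV₁₂ : IsStableTStructure D V₁ V₂)
    (hF₀ : ∀ X ∈ U₀, F.obj X ∈ V₀) (hF₁ : ∀ X ∈ U₁, F.obj X ∈ V₁)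
    (hF₂ : ∀ X ∈ U₂, F.obj X ∈ V₂)
    (h₀ : RestrictsToEquivalence F U₀ V₀) (h₁ : RestrictsToEquivalence F U₁ V₁) :
    F.IsEquivalence := by
  have hF := map_bijective_of_consecutive F hU₀₁ hU₁₂ hV₀₁ hV₁₂ hF₀ hF₁ hF₂ h₀.1 h₁.1
  have : F.Faithful := ⟨fun h => (hF _ _).1 h⟩
  have : F.Full := ⟨fun φ => (hF _ _).2 φ⟩
  have mem_essImage {U : Set C} {V : Set D} (h : RestrictsToEquivalence F U V) {Z : D}
      (hZ : Z ∈ V) : F.essImage Z := by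
    obtain ⟨X, -, hX⟩ := h.2 Z hZ
    exact ⟨X, hX⟩
  have : F.EssSurj := ⟨fun Z => by
    obtain ⟨P, Q, hP, hQ, p, q, r, hS⟩ := hV₀₁.exists_triangle Z
    exact F.essImage.ext_of_isTriangulatedClosed₂ _ hS (mem_essImage h₀ hP) (mem_essImage h₁ hQ)⟩
  exact { }

end Functor

lemma add_nsmul_of_forall_add {M : Type*} [AddMonoid M] {P : M → Prop} {a : M}
    (h : ∀ i, P i → P (i + a)) {t : M} (ht : P t) (k : ℕ) : P (t + k • a) := by
  induction k with
  | zero => simpa using ht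
  | succ k ih => simpa [succ_nsmul, add_assoc] using h _ ih

lemma ZMod.exists_nsmul_two_eq_one {n : ℕ} (hn : Odd n) :
    ∃ k : ℕ, k • (2 : ZMod n) = 1 := by
  obtain ⟨l, rfl⟩ := hn
  refine ⟨l + 1, ?_⟩
  have h : ((2 * l + 1 : ℕ) : ZMod (2 * l + 1)) = 0 := ZMod.natCast_self _
  push_cast at h
  rw [nsmul_eq_mul]
  push_cast
  linear_combination h

theorem stmt3_general (n : ℕ) (F : C ⥤ D) [F.CommShift ℤ] [F.IsTriangulated]
    (U : ZMod n → Set C) (V : ZMod n → Set D)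
    (hgonU : ∀ i : ZMod n, IsStableTStructure C (U i) (U (i + 1)))
    (hgonV : ∀ i : ZMod n, IsStableTStructure D (V i) (V (i + 1)))
    (hF : ∀ (i : ZMod n), ∀ X ∈ U i, F.obj X ∈ V i) :
    (Odd n → ∀ t : ZMod n, RestrictsToEquivalence F (U t) (V t) → F.IsEquivalence) ∧
    (Even n → ∀ t : ZMod n, RestrictsToEquivalence F (U t) (V t) →
      RestrictsToEquivalence F (U (t + 1)) (V (t + 1)) → F.IsEquivalence) := by
  have step (i : ZMod n) (hi : RestrictsToEquivalence F (U i) (V i)) :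
      RestrictsToEquivalence F (U (i + 2)) (V (i + 2)) := by
    have := restrictsToEquivalence_of_consecutive F (hgonU i) (hgonU (i + 1)) (hgonV i)
      (hgonV (i + 1)) (hF i) (hF (i + 1)) (hF (i + 1 + 1)) hi
    rwa [add_assoc, one_add_one_eq_two] at this
  have equiv (t : ZMod n) : RestrictsToEquivalence F (U t) (V t) →
      RestrictsToEquivalence F (U (t + 1)) (V (t + 1)) → F.IsEquivalence :=
    isEquivalence_of_consecutive F (hgonU t) (hgonU (t + 1)) (hgonV t) (hgonV (t + 1))
      (hF t) (hF (t + 1)) (hF (t + 1 + 1))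
  refine ⟨fun hodd t ht => equiv t ht ?_, fun _ => equiv⟩
  obtain ⟨k, hk⟩ := ZMod.exists_nsmul_two_eq_one hodd
  simpa only [hk] using
    add_nsmul_of_forall_add (P := fun i => RestrictsToEquivalence F (U i) (V i)) step ht k

/-- given `n`-gons of recollements `(U i)` in `C` and `(V i)` in `D`
(indexed cyclically by `ZMod n`) and a triangle functor `F` with `F (U i) ⊆ V i`:
if `n` is odd and `F` restricts to an equivalence on some `U t`, then `F` is an equivalence;
if `n` is even and `F` restricts to equivalences on some `U t` and `U (t+1)`,
then `F` is an equivalence. -/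
theorem stmt3 (n : ℕ) (hn : 0 < n) (F : C ⥤ D) [F.CommShift ℤ] [F.IsTriangulated]
    (U : ZMod n → Set C) (V : ZMod n → Set D)
    (hgonU : ∀ i : ZMod n, IsStableTStructure C (U i) (U (i + 1)))
    (hgonV : ∀ i : ZMod n, IsStableTStructure D (V i) (V (i + 1)))
    (hF : ∀ (i : ZMod n), ∀ X ∈ U i, F.obj X ∈ V i) :
    (Odd n → ∀ t : ZMod n, RestrictsToEquivalence F (U t) (V t) → F.IsEquivalence) ∧
    (Even n → ∀ t : ZMod n, RestrictsToEquivalence F (U t) (V t) →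
      RestrictsToEquivalence F (U (t + 1)) (V (t + 1)) → F.IsEquivalence) :=
  stmt3_general n F U V hgonU hgonV hF

end PaperIKM
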